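/- arXiv:2505.08951 — 6 statements merged into one kernel-verified Lean document; each statement's English description precedes it below -/
import Mathlib

section
/- For all integers m ≥ 1 and n ≥ 2 there exists a partition Π of the vertex set of the Hamming graph H(n,m) into m parts with maximum degree Δ(Π) ≤ 1 and imbalance ι(Π) ≥ m−2 if m is even, and ι(Π) ≥ m−1 if m is odd. -/
open Finset

/-- The degree of vertex `x` in the subgraph of the Hamming graph `H(n,m)` induced on `S`:
the number of `y ∈ S` at Hamming distance exactly `1` from `x`. -/
def degIn {n m : ℕ} (S : Finset (Fin n → Fin m)) (x : Fin n → Fin m) : ℕ :=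
  (S.filter fun y => hammingDist x y = 1).card

/-- `V` is a partition of the vertex set of `H(n,m)` into `m` (possibly empty) parts. -/
def IsHamPartition {n m : ℕ} (V : Fin m → Finset (Fin n → Fin m)) : Prop :=
  (Pairwise fun i j => Disjoint (V i) (V j)) ∧ ∀ x, ∃ i, x ∈ V i

/-- The imbalance `ι(Π) = ∑ i, | |V i| - m^(n-1) |` of a partition of `H(n,m)`. -/
def imbalance {n m : ℕ} (V : Fin m → Finset (Fin n → Fin m)) : ℤ :=
  ∑ i, |((V i).card : ℤ) - (m : ℤ) ^ (n - 1)|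

/-!
Colour a vertex `x` of `H(n, m)`, viewed in `(ℤ/m)ⁿ`, by its coordinate sum, shifted by one on a
set `R`. Two adjacent vertices of the same colour then differ by a unit step `x ↦ x + eⱼ` leaving
`R`, or by the reverse of a step entering `R`, so the colouring has maximum degree at most one as
soon as every vertex has at most one such step (`IsMatchingBoundary`). Colour class `c` has
`m^(n-1) + L(c-1) - L(c)` vertices, where `L(c)` counts the points of `R` with coordinate sum `c`,
so the imbalance is the cyclic variation of `L`. In dimension one the odd residues give variation
at least `m - 1`, and `R ↦ {x | x₀ ≠ 0 ∧ (x₀ = 1 → tail x ∈ R)}` raises the dimension while keeping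
the matching condition and shifting `L` by one, hence keeping the variation.
-/

namespace HammingPartition

section Coloring

variable {ι α : Type*} [Fintype ι] [CommRing α]

def coordSum (x : ι → α) : α := ∑ i, x i

lemma coordSum_add (x y : ι → α) : coordSum (x + y) = coordSum x + coordSum y :=
  sum_add_distrib

lemma coordSum_sub (x y : ι → α) : coordSum (x - y) = coordSum x - coordSum y :=
  sum_sub_distrib ..

lemma coordSum_eq_head_add_tail {k : ℕ} (x : Fin (k + 1) → α) :
    coordSum x = x 0 + coordSum (Fin.tail x) :=
  Fin.sum_univ_succ x

lemma coordSum_single [DecidableEq ι] (j : ι) (a : α) : coordSum (Pi.single j a) = a := by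
  simp [coordSum]

variable [DecidableEq α]

def levelCount (S : Finset (ι → α)) (c : α) : ℕ := #{x ∈ S | coordSum x = c}

lemma levelCount_union_of_disjoint {S T : Finset (ι → α)} (h : Disjoint S T) (c : α) :
    levelCount (S ∪ T) c = levelCount S c + levelCount T c := by
  rw [levelCount, filter_union, card_union_of_disjoint (disjoint_filter_filter h)]
  rfl

lemma levelCount_add_coordSum {S : Finset (ι → α)} {v : ι → α} (hS : ∀ x, x + v ∈ S ↔ x ∈ S)
    (c : α) : levelCount S (c + coordSum v) = levelCount S c := by
  refine (card_nbij' (· + v) (· - v) ?_ ?_ (fun x _ => by simp) (fun x _ => by simp)).symm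
  · intro x hx
    simp_all [coordSum_add]
  · intro x hx
    simp only [coe_filter, Set.mem_ofPred_eq] at hx ⊢
    exact ⟨(hS _).mp (by simpa using hx.1), by rw [coordSum_sub, hx.2, add_sub_cancel_right]⟩

def shiftColor (R : Finset (ι → α)) (x : ι → α) : α := coordSum x + if x ∈ R then 1 else 0

section

variable [DecidableEq ι]

def IsMatchingBoundary (R : Finset (ι → α)) : Prop :=
  (∀ x ∈ R, #{j | x + Pi.single j 1 ∉ R} ≤ 1) ∧ (∀ x ∉ R, #{j | x - Pi.single j 1 ∈ R} ≤ 1)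

lemma isMatchingBoundary_of_subsingleton [Subsingleton ι] (R : Finset (ι → α)) :
    IsMatchingBoundary R :=
  have hle (p : ι → Prop) [DecidablePred p] : #{j | p j} ≤ 1 :=
    (card_filter_le _ _).trans (Fintype.card_le_one_iff_subsingleton.mpr ‹_›)
  ⟨fun _ _ => hle _, fun _ _ => hle _⟩

lemma exists_eq_add_single_of_hammingDist_eq_one {x y : ι → α} (h : hammingDist x y = 1) :
    ∃ j, y = x + Pi.single j (y j - x j) := by
  obtain ⟨j, hj⟩ := card_eq_one.mp h
  refine ⟨j, funext fun i => ?_⟩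
  rcases eq_or_ne i j with rfl | hij
  · simp
  · have hxy : i ∉ ({i | x i ≠ y i} : Finset ι) := by rw [hj]; simpa using hij
    simp only [mem_filter, mem_univ, true_and, not_not] at hxy
    simp [hij, hxy]

lemma isMatchingBoundary_empty : IsMatchingBoundary (∅ : Finset (ι → α)) := by
  simp [IsMatchingBoundary]

end

variable [Fintype α]

def levelVariation (R : Finset (ι → α)) : ℤ :=
  ∑ c, |(levelCount R (c - 1) : ℤ) - levelCount R c|

lemma levelVariation_nonneg (R : Finset (ι → α)) : 0 ≤ levelVariation R :=
  sum_nonneg fun _ _ => abs_nonneg _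

variable [DecidableEq ι]

def colorClass (R : Finset (ι → α)) (c : α) : Finset (ι → α) := {x | shiftColor R x = c}

lemma mem_colorClass {R : Finset (ι → α)} {c : α} {x : ι → α} :
    x ∈ colorClass R c ↔ shiftColor R x = c := by
  simp [colorClass]

lemma colorClass_eq (R : Finset (ι → α)) (c : α) :
    colorClass R c = {x ∈ Rᶜ | coordSum x = c} ∪ {x ∈ R | coordSum x = c - 1} := by
  ext x
  by_cases hx : x ∈ R <;> simp [mem_colorClass, shiftColor, hx, eq_sub_iff_add_eq]

lemma levelCount_univ [Nonempty ι] (c : α) :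
    levelCount (univ : Finset (ι → α)) c = Fintype.card α ^ (Fintype.card ι - 1) := by
  obtain ⟨i⟩ := ‹Nonempty ι›
  set N := levelCount (univ : Finset (ι → α))
  have hconst (c : α) : N c = N 0 := by
    simpa [coordSum_single] using
      levelCount_add_coordSum (S := univ) (v := Pi.single i c) (by simp) 0
  have hsum : Fintype.card α * N 0 = Fintype.card α * Fintype.card α ^ (Fintype.card ι - 1) :=
    calc Fintype.card α * N 0 = ∑ c, N c := by simp [hconst]
      _ = #(univ : Finset (ι → α)) := (card_eq_sum_card_fiberwise (by simp)).symm
      _ = Fintype.card α ^ Fintype.card ι := by simp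
      _ = _ := by rw [← pow_succ', Nat.sub_add_cancel Fintype.card_pos]
  rw [hconst c]
  exact Nat.eq_of_mul_eq_mul_left Fintype.card_pos hsum

lemma card_colorClass [Nonempty ι] (R : Finset (ι → α)) (c : α) :
    (#(colorClass R c) : ℤ) =
      Fintype.card α ^ (Fintype.card ι - 1) + levelCount R (c - 1) - levelCount R c := by
  have hsplit := levelCount_union_of_disjoint (disjoint_compl_right (a := R)) c
  rw [union_compl, levelCount_univ] at hsplit
  rw [colorClass_eq, card_union_of_disjoint (disjoint_filter_filter disjoint_compl_left)]
  change ((levelCount Rᶜ c + levelCount R (c - 1) : ℕ) : ℤ) = _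
  have := congrArg (Nat.cast : ℕ → ℤ) hsplit
  push_cast at this ⊢
  linarith

lemma exists_step_of_mem_colorClass {R : Finset (ι → α)} {c : α} {x y : ι → α}
    (hx : x ∈ colorClass R c) (hy : y ∈ colorClass R c) (hxy : hammingDist x y = 1) :
    ∃ j, (x ∈ R ∧ y ∉ R ∧ y = x + Pi.single j 1) ∨ (x ∉ R ∧ y ∈ R ∧ y = x - Pi.single j 1) := by
  obtain ⟨j, hyx⟩ := exists_eq_add_single_of_hammingDist_eq_one hxy
  set a := y j - x j
  have ha : a ≠ 0 := by
    rintro h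
    rw [h, Pi.single_zero, add_zero] at hyx
    simp [hyx] at hxy
  have hsum : coordSum y = coordSum x + a := by rw [hyx, coordSum_add, coordSum_single]
  rw [mem_colorClass, shiftColor] at hx hy
  refine ⟨j, ?_⟩
  by_cases hxR : x ∈ R <;> by_cases hyR : y ∈ R <;> simp only [hxR, hyR, if_true, if_false] at hx hy
  · exact absurd (by linear_combination hy - hx - hsum) ha
  · have ha1 : a = 1 := by linear_combination hy - hx - hsum
    exact Or.inl ⟨hxR, hyR, by rw [hyx, ha1]⟩
  · have ha1 : a = -1 := by linear_combination hy - hx - hsum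
    exact Or.inr ⟨hxR, hyR, by rw [hyx, ha1, Pi.single_neg, sub_eq_add_neg]⟩
  · exact absurd (by linear_combination hy - hx - hsum) ha

lemma card_neighbors_in_colorClass_le_one {R : Finset (ι → α)} (hR : IsMatchingBoundary R)
    {c : α} {x : ι → α} (hx : x ∈ colorClass R c) :
    #{y ∈ colorClass R c | hammingDist x y = 1} ≤ 1 := by
  by_cases hxR : x ∈ R
  · have hsub : {y ∈ colorClass R c | hammingDist x y = 1} ⊆
        image (fun j => x + Pi.single j 1) {j | x + Pi.single j 1 ∉ R} := by
      intro y hy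
      rw [mem_filter] at hy
      obtain ⟨j, ⟨-, hyR, rfl⟩ | ⟨hxR', -⟩⟩ := exists_step_of_mem_colorClass hx hy.1 hy.2
      · exact mem_image_of_mem _ (by simpa using hyR)
      · exact absurd hxR hxR'
    exact (card_le_card hsub).trans (card_image_le.trans (hR.1 x hxR))
  · have hsub : {y ∈ colorClass R c | hammingDist x y = 1} ⊆
        image (fun j => x - Pi.single j 1) {j | x - Pi.single j 1 ∈ R} := by
      intro y hy
      rw [mem_filter] at hy
      obtain ⟨j, ⟨hxR', -⟩ | ⟨-, hyR, rfl⟩⟩ := exists_step_of_mem_colorClass hx hy.1 hy.2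
      · exact absurd hxR' hxR
      · exact mem_image_of_mem _ (by simpa using hyR)
    exact (card_le_card hsub).trans (card_image_le.trans (hR.2 x hxR))

end Coloring

section Extension

variable {α : Type*} [CommRing α] [Fintype α] [DecidableEq α] {k : ℕ}

def extend (R : Finset (Fin k → α)) : Finset (Fin (k + 1) → α) :=
  {x | x 0 ≠ 0 ∧ (x 0 = 1 → Fin.tail x ∈ R)}

lemma mem_extend {R : Finset (Fin k → α)} {x : Fin (k + 1) → α} :
    x ∈ extend R ↔ x 0 ≠ 0 ∧ (x 0 = 1 → Fin.tail x ∈ R) := by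
  simp [extend]

lemma add_single_zero_mem_extend {R : Finset (Fin k → α)} {x : Fin (k + 1) → α} {s : α} :
    x + Pi.single 0 s ∈ extend R ↔ x 0 + s ≠ 0 ∧ (x 0 + s = 1 → Fin.tail x ∈ R) := by
  have htail : Fin.tail (x + Pi.single 0 s) = Fin.tail x := by
    ext j
    simp [Fin.tail]
  simp [mem_extend, htail]

lemma add_single_succ_mem_extend {R : Finset (Fin k → α)} {x : Fin (k + 1) → α} {i : Fin k}
    {s : α} :
    x + Pi.single i.succ s ∈ extend R ↔ x 0 ≠ 0 ∧ (x 0 = 1 → Fin.tail x + Pi.single i s ∈ R) := by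
  have htail : Fin.tail (x + Pi.single i.succ s) = Fin.tail x + Pi.single i s := by
    ext j
    simp [Fin.tail, Pi.single_apply]
  simp [mem_extend, htail]

lemma isMatchingBoundary_extend (h2 : (2 : α) ≠ 0) {R : Finset (Fin k → α)}
    (hR : IsMatchingBoundary R) : IsMatchingBoundary (extend R) := by
  have h1 : (1 : α) ≠ 0 := fun h => h2 (by rw [← one_add_one_eq_two, h, add_zero])
  have h21 : (2 : α) ≠ 1 := fun h => h1 (by linear_combination h)
  simp only [IsMatchingBoundary, sub_eq_add_neg, ← Pi.single_neg] at hR ⊢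
  refine ⟨fun y hy => ?_, fun x hx => ?_⟩ <;>
    simp only [Fin.card_filter_univ_succ', add_single_zero_mem_extend, add_single_succ_mem_extend]
  · rw [mem_extend] at hy
    by_cases hy1 : y 0 = 1
    · simpa [hy1, h1, h2, h21, one_add_one_eq_two] using hR.1 _ (hy.2 hy1)
    · simp [hy.1, hy1, apply_ite (· ≤ 1)]
  · rw [mem_extend] at hx
    push Not at hx
    by_cases hx0 : x 0 = 0
    · simp [hx0, apply_ite (· ≤ 1)]
    · obtain ⟨hx1, hxR⟩ := hx hx0
      simpa [hx1, h1] using hR.2 _ hxR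

lemma exists_levelCount_extend [Nontrivial α] (R : Finset (Fin (k + 1) → α)) :
    ∃ K, ∀ c, levelCount (extend R) c = K + levelCount R (c - 1) := by
  set A : Finset (Fin (k + 2) → α) := {x | x 0 ≠ 0 ∧ x 0 ≠ 1}
  set B : Finset (Fin (k + 2) → α) := {x | x 0 = 1 ∧ Fin.tail x ∈ R}
  have hAB : extend R = A ∪ B := by
    ext x
    simp only [mem_extend, mem_union, A, B, mem_filter_univ]
    by_cases hx1 : x 0 = 1 <;> simp [hx1]
  have hdisj : Disjoint A B := disjoint_filter.2 fun x _ hA hB => hA.2 hB.1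
  -- `A` is invariant under translation along the coordinate `1`, so its levels are all equal.
  have hA (c : α) : levelCount A c = levelCount A 0 := by
    simpa [coordSum_single] using
      levelCount_add_coordSum (S := A) (v := Pi.single 1 c) (fun x => by simp [A]) 0
  have hB (c : α) : levelCount B c = levelCount R (c - 1) := by
    refine card_nbij' Fin.tail (fun t => Fin.cons (1 : α) t) (fun x hx => ?_) (fun t ht => ?_)
      (fun x hx => ?_) (fun t _ => Fin.tail_cons _ _)
    · simp only [coe_filter, mem_filter_univ, Set.mem_ofPred_eq, B] at hx ⊢
      refine ⟨hx.1.2, ?_⟩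
      rw [← hx.2, coordSum_eq_head_add_tail x, hx.1.1, add_sub_cancel_left]
    · simp only [coe_filter, mem_filter_univ, Set.mem_ofPred_eq, B] at ht ⊢
      simp [coordSum_eq_head_add_tail, ht.1, ht.2]
    · simp only [coe_filter, mem_filter_univ, Set.mem_ofPred_eq, B] at hx
      simp only [← hx.1.1, Fin.cons_self_tail]
  exact ⟨levelCount A 0, fun c => by rw [hAB, levelCount_union_of_disjoint hdisj, hA, hB]⟩

lemma levelVariation_extend [Nontrivial α] (R : Finset (Fin (k + 1) → α)) :
    levelVariation (extend R) = levelVariation R := by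
  obtain ⟨K, hK⟩ := exists_levelCount_extend R
  simp only [levelVariation, hK]
  push_cast
  simp only [add_sub_add_left_eq_sub]
  exact (Equiv.subRight 1).sum_comp fun c => |(levelCount R (c - 1) : ℤ) - levelCount R c|

end Extension

section Construction

open Fin.CommRing

variable {m : ℕ}

def oddBase (m : ℕ) : Finset (Fin 1 → Fin (m + 1)) := {x | Odd (x 0 : ℕ)}

lemma levelCount_oddBase (c : Fin (m + 1)) :
    levelCount (oddBase m) c = if Odd (c : ℕ) then 1 else 0 := by
  split_ifs with hc
  · rw [levelCount, card_eq_one]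
    refine ⟨fun _ => c, ?_⟩
    ext x
    simp only [oddBase, coordSum, mem_filter, mem_univ, true_and, Fin.sum_univ_one, mem_singleton,
      funext_iff, Fin.forall_fin_one]
    exact ⟨And.right, fun h => ⟨h ▸ hc, h⟩⟩
  · rw [levelCount, card_eq_zero, filter_eq_empty_iff]
    simp only [oddBase, coordSum, mem_filter_univ, Fin.sum_univ_one]
    exact fun x hx h => hc (h ▸ hx)

lemma levelVariation_oddBase_ge : (m : ℤ) ≤ levelVariation (oddBase m) := by
  have hstep (c : Fin (m + 1)) (hc : c ≠ 0) :
      |(levelCount (oddBase m) (c - 1) : ℤ) - levelCount (oddBase m) c| = 1 := by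
    obtain ⟨j, hj⟩ := Nat.exists_eq_add_one.mpr (Nat.pos_of_ne_zero (Fin.val_ne_zero_iff.mpr hc))
    rw [levelCount_oddBase, levelCount_oddBase, Fin.coe_sub_one, if_neg hc, hj, Nat.add_sub_cancel]
    by_cases hodd : Odd j <;> simp [hodd, Nat.odd_add_one]
  calc (m : ℤ) = ∑ c ∈ univ.erase (0 : Fin (m + 1)), 1 := by simp [card_erase_of_mem]
    _ = ∑ c ∈ univ.erase (0 : Fin (m + 1)),
          |(levelCount (oddBase m) (c - 1) : ℤ) - levelCount (oddBase m) c| :=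
        (sum_congr rfl fun c hc => (hstep c (ne_of_mem_erase hc)).symm)
    _ ≤ levelVariation (oddBase m) :=
        sum_le_sum_of_subset_of_nonneg (erase_subset _ _) fun _ _ _ => abs_nonneg _

lemma exists_isMatchingBoundary_levelVariation_ge (hm : 2 ≤ m) (d : ℕ) :
    ∃ R : Finset (Fin (d + 1) → Fin (m + 1)),
      IsMatchingBoundary R ∧ (m : ℤ) ≤ levelVariation R := by
  have : Nontrivial (Fin (m + 1)) := Fin.nontrivial_iff_two_le.mpr (by omega)
  have h2 : (2 : Fin (m + 1)) ≠ 0 := by simp [Fin.ext_iff, Nat.mod_eq_of_lt (by omega : 2 < m + 1)]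
  induction d with
  | zero => exact ⟨oddBase m, isMatchingBoundary_of_subsingleton (ι := Fin 1) _,
      levelVariation_oddBase_ge⟩
  | succ d ih =>
    obtain ⟨R, hR, hvar⟩ := ih
    exact ⟨extend R, isMatchingBoundary_extend h2 hR, (levelVariation_extend R).symm ▸ hvar⟩

lemma isHamPartition_colorClass {n : ℕ} (R : Finset (Fin n → Fin (m + 1))) :
    IsHamPartition (colorClass R) :=
  ⟨fun _ _ hij => disjoint_left.2 fun _ hx hx' => hij ((mem_colorClass.1 hx).symm.trans
    (mem_colorClass.1 hx')), fun _ => ⟨_, mem_colorClass.2 rfl⟩⟩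

lemma imbalance_colorClass {n : ℕ} (R : Finset (Fin (n + 1) → Fin (m + 1))) :
    imbalance (colorClass R) = levelVariation R := by
  refine sum_congr rfl fun c _ => ?_
  rw [card_colorClass, Fintype.card_fin, Fintype.card_fin]
  congr 1
  ring

end Construction

end HammingPartition

open HammingPartition

/-- For all integers `m ≥ 1` and `n ≥ 2` there exists a partition `Π` of `H(n,m)` into `m`
parts with maximum degree `Δ(Π) ≤ 1` and imbalance `ι(Π) ≥ m-2` if `m` is even and
`ι(Π) ≥ m-1` if `m` is odd. -/
theorem imbalanced_partitions_degree_one (m n : ℕ) (hm : 1 ≤ m) (hn : 2 ≤ n) :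
    ∃ V : Fin m → Finset (Fin n → Fin m), IsHamPartition V ∧
      (∀ i, ∀ x ∈ V i, degIn (V i) x ≤ 1) ∧
      (if Even m then (m : ℤ) - 2 else (m : ℤ) - 1) ≤ imbalance V := by
  obtain ⟨q, rfl⟩ : ∃ q, m = q + 1 := ⟨m - 1, by omega⟩
  obtain ⟨d, rfl⟩ : ∃ d, n = d + 1 := ⟨n - 1, by omega⟩
  open Fin.CommRing in
  obtain ⟨R, hR, hvar⟩ : ∃ R : Finset (Fin (d + 1) → Fin (q + 1)), IsMatchingBoundary R ∧
      (if Even (q + 1) then ((q + 1 : ℕ) : ℤ) - 2 else ((q + 1 : ℕ) : ℤ) - 1) ≤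
        levelVariation R := by
    simp only [Nat.even_iff]
    rcases le_or_gt 2 q with hq | hq
    · obtain ⟨R, hR, hvar⟩ := exists_isMatchingBoundary_levelVariation_ge hq d
      exact ⟨R, hR, le_trans (by split_ifs <;> omega) hvar⟩
    · exact ⟨∅, isMatchingBoundary_empty,
        le_trans (by split_ifs <;> omega) (levelVariation_nonneg ∅)⟩
  exact ⟨colorClass R, isHamPartition_colorClass R,
    fun _ _ hx => card_neighbors_in_colorClass_le_one hR hx, (imbalance_colorClass R).symm ▸ hvar⟩
end

section
/- Let m ≥ 2 and n ≥ d ≥ 1 be integers, let 1 ≤ d' ≤ d and set n' = ⌈n / ⌊d/d'⌋⌉. If the Hamming graph H(n',m) admits a partition Π' of its vertex set into m parts with maximum degree Δ(Π') ≤ d' and imbalance ι(Π') ≥ i', then H(n,m) admits a partition Π of its vertex set into m parts with maximum degree Δ(Π) ≤ d and imbalance ι(Π) ≥ m^{n−n'}·i'. -/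
/-!
Identify `Fin m` with `ℤ/m`, cut the `n` coordinates into `n'` blocks of at most
`k = ⌊d/d'⌋` consecutive coordinates, and let `φ : (ℤ/m)ⁿ → (ℤ/m)ⁿ'` sum each block.
Pull `Π'` back along `φ`. Changing one coordinate of `x` changes exactly one block sum, so `φ`
maps neighbours to neighbours; conversely a neighbour of `φ x` has at most `k` preimages among
the neighbours of `x`, one for each coordinate of the changed block. Hence `Δ(Π) ≤ k d' ≤ d`.
Since `φ` is a surjective homomorphism, all its fibres have `m^(n-n')` elements, which
multiplies every part size, and therefore the imbalance, by `m^(n-n')`.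
-/

open Finset

open Function

section HammingNorm

variable {ι G : Type*} [Fintype ι] [DecidableEq ι] [DecidableEq G] [Zero G]

theorem hammingNorm_pi_single {t : ι} {c : G} (hc : c ≠ 0) :
    hammingNorm (Pi.single t c : ι → G) = 1 := by
  rw [hammingNorm, card_eq_one]
  refine ⟨t, ?_⟩
  ext s
  by_cases hs : s = t <;> simp [hs, hc]

theorem hammingNorm_eq_one_iff {v : ι → G} :
    hammingNorm v = 1 ↔ ∃ t, ∃ c ≠ 0, v = Pi.single t c := by
  refine ⟨fun h => ?_, fun ⟨t, c, hc, hv⟩ => hv ▸ hammingNorm_pi_single hc⟩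
  obtain ⟨t, ht⟩ := card_eq_one.mp h
  have hsupp : ∀ s, v s ≠ 0 ↔ s = t := fun s => by
    simpa using congrArg (s ∈ ·) ht
  refine ⟨t, v t, (hsupp t).mpr rfl, funext fun s => ?_⟩
  by_cases hs : s = t
  · simp [hs]
  · simpa [hs] using (hsupp s).not.mpr hs

end HammingNorm

theorem Pi.single_eq_single_iff_of_ne_zero {ι G : Type*} [DecidableEq ι] [Zero G] {i j : ι}
    {c d : G} (hc : c ≠ 0) : (Pi.single i c : ι → G) = Pi.single j d ↔ i = j ∧ c = d := by
  refine ⟨fun h => ?_, fun ⟨hij, hcd⟩ => hij ▸ hcd ▸ rfl⟩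
  have hij : i = j := by
    by_contra hij
    exact hc (by simpa [hij] using congrFun h i)
  subst hij
  exact ⟨rfl, Pi.single_injective i h⟩

theorem hammingDist_eq_one_iff {ι G : Type*} [Fintype ι] [DecidableEq ι] [DecidableEq G]
    [AddGroup G] {x y : ι → G} :
    hammingDist x y = 1 ↔ ∃ t, ∃ c ≠ 0, y = x + Pi.single t c := by
  simp only [hammingDist_eq_hammingNorm, hammingNorm_eq_one_iff, neg_add_eq_iff_eq_add]

section BlockSum

variable {ι ι' G : Type*} [Fintype ι] [DecidableEq ι'] [AddCommMonoid G]

def blockSum (b : ι → ι') : (ι → G) →+ (ι' → G) where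
  toFun x j := ∑ t with b t = j, x t
  map_zero' := by ext; simp
  map_add' x y := by ext; simp [sum_add_distrib]

variable (b : ι → ι')

theorem blockSum_pi_single [DecidableEq ι] (t : ι) (c : G) :
    blockSum b (Pi.single t c) = Pi.single (b t) c := by
  ext j
  by_cases hj : b t = j <;> simp [blockSum, Pi.single_apply, hj]

theorem blockSum_surjective [Fintype ι'] (hb : Surjective b) :
    Surjective (blockSum b : (ι → G) → ι' → G) := by
  classical
  intro z
  refine ⟨∑ j, Pi.single (surjInv hb j) (z j), ?_⟩
  simp [map_sum, blockSum_pi_single, surjInv_eq hb, univ_sum_single]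

end BlockSum

section Neighbors

variable {ι ι' G : Type*} [Fintype ι] [DecidableEq ι] [Fintype ι'] [DecidableEq ι']
  [AddCommGroup G] [DecidableEq G] {b : ι → ι'}

theorem hammingDist_blockSum_eq_one {x y : ι → G} (h : hammingDist x y = 1) :
    hammingDist (blockSum b x) (blockSum b y) = 1 := by
  obtain ⟨t, c, hc, rfl⟩ := hammingDist_eq_one_iff.mp h
  exact hammingDist_eq_one_iff.mpr ⟨b t, c, hc, by rw [map_add, blockSum_pi_single]⟩

variable [Fintype G] {k : ℕ}

theorem card_neighbors_blockSum_eq_le (hfib : ∀ j, #{t | b t = j} ≤ k) (x : ι → G)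
    (z : ι' → G) : #{y | hammingDist x y = 1 ∧ blockSum b y = z} ≤ k := by
  rcases (univ.filter fun y => hammingDist x y = 1 ∧ blockSum b y = z).eq_empty_or_nonempty
    with h | ⟨y₀, hy₀⟩
  · simp [h]
  obtain ⟨hy₀x, hy₀z⟩ := by simpa using hy₀
  obtain ⟨t₀, c₀, -, rfl⟩ := hammingDist_eq_one_iff.mp hy₀x
  calc #{y | hammingDist x y = 1 ∧ blockSum b y = z}
      ≤ #(({t | b t = b t₀} : Finset ι).image fun t => x + Pi.single t c₀) := card_le_card ?_
    _ ≤ #{t | b t = b t₀} := card_image_le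
    _ ≤ k := hfib _
  intro y hy
  obtain ⟨hyx, hyz⟩ := by simpa using hy
  obtain ⟨t, c, hc, rfl⟩ := hammingDist_eq_one_iff.mp hyx
  rw [← hy₀z, map_add, map_add, blockSum_pi_single, blockSum_pi_single, add_right_inj,
    Pi.single_eq_single_iff_of_ne_zero hc] at hyz
  obtain ⟨hbt, rfl⟩ := hyz
  exact mem_image.mpr ⟨t, by simpa using hbt, rfl⟩

theorem card_neighbors_blockSum_mem_le (hfib : ∀ j, #{t | b t = j} ≤ k)
    (S' : Finset (ι' → G)) (x : ι → G) :
    #{y | blockSum b y ∈ S' ∧ hammingDist x y = 1}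
      ≤ k * #{w ∈ S' | hammingDist (blockSum b x) w = 1} := by
  refine card_le_mul_card_image_of_maps_to (f := blockSum b) (fun y hy => ?_) k (fun z _ => ?_)
  · simp only [mem_filter, mem_univ, true_and] at hy ⊢
    exact ⟨hy.1, hammingDist_blockSum_eq_one hy.2⟩
  · refine le_trans (card_le_card fun y hy => ?_) (card_neighbors_blockSum_eq_le hfib x z)
    simp only [mem_filter, mem_univ, true_and] at hy ⊢
    exact ⟨hy.1.2, hy.2⟩

theorem card_blockSum_fiber (hb : Surjective b) (z : ι' → G) :
    #{x | blockSum b x = z} = Fintype.card G ^ (Fintype.card ι - Fintype.card ι') := by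
  have hequal : ∀ w, #{x | blockSum b x = w} = #{x | blockSum b x = z} := fun w =>
    AddMonoidHom.card_fiber_eq_of_mem_range _ (blockSum_surjective b hb w)
      (blockSum_surjective b hb z)
  have htotal : Fintype.card G ^ Fintype.card ι
      = Fintype.card G ^ Fintype.card ι' * #{x | blockSum b x = z} := by
    calc Fintype.card G ^ Fintype.card ι = #(univ : Finset (ι → G)) := by simp
      _ = ∑ w : ι' → G, #{x | blockSum b x = w} := card_eq_sum_card_fiberwise (by simp)
      _ = _ := by simp [hequal]
  rw [← Nat.sub_add_cancel (Fintype.card_le_of_surjective b hb), pow_add, mul_comm] at htotal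
  exact (Nat.eq_of_mul_eq_mul_left (by positivity) htotal).symm

end Neighbors

theorem exists_surjective_card_fiber_le (n : ℕ) {k : ℕ} (hk : 0 < k) :
    ∃ b : Fin n → Fin ((n + k - 1) / k), Surjective b ∧ ∀ j, #{t | b t = j} ≤ k := by
  have hq := Nat.div_add_mod' (n + k - 1) k
  have hr := Nat.mod_lt (n + k - 1) hk
  refine ⟨fun t => ⟨t / k, ?_⟩, fun j => ⟨⟨j * k, ?_⟩, ?_⟩, fun j => ?_⟩
  · rw [Nat.div_lt_iff_lt_mul hk]
    omega
  · have := Nat.mul_le_mul_right k (Nat.succ_le_of_lt j.2)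
    rw [Nat.succ_mul] at this
    omega
  · exact Fin.ext (Nat.mul_div_cancel _ hk)
  · refine le_of_le_of_eq ?_ (card_range k)
    refine card_le_card_of_injOn (fun t => (t : ℕ) % k)
      (fun t _ => mem_coe.mpr (mem_range.mpr (Nat.mod_lt _ hk))) fun t ht t' ht' h => ?_
    simp only [coe_filter, mem_univ, true_and, Set.mem_ofPred_eq, Fin.ext_iff] at ht ht' h
    have ht_eq := Nat.div_add_mod t k
    have ht'_eq := Nat.div_add_mod t' k
    rw [ht, h] at ht_eq
    rw [ht'] at ht'_eq
    exact Fin.ext (ht_eq.symm.trans ht'_eq)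

section Pullback

variable {α β κ : Type*} [Fintype α] [DecidableEq β]

def pullbackPartition (φ : α → β) (V' : κ → Finset β) (i : κ) : Finset α :=
  {x | φ x ∈ V' i}

theorem card_pullbackPartition {φ : α → β} {c : ℕ} (hφ : ∀ z, #{x | φ x = z} = c)
    (V' : κ → Finset β) (i : κ) : #(pullbackPartition φ V' i) = c * #(V' i) := by
  calc #(pullbackPartition φ V' i) = ∑ z ∈ V' i, #{x | φ x = z} := by
        rw [pullbackPartition, card_eq_sum_card_fiberwise fun x hx => by simpa using hx]
        refine sum_congr rfl fun z hz => ?_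
        rw [filter_filter]
        exact congrArg card (filter_congr fun x _ => and_iff_right_of_imp fun hx => hx ▸ hz)
    _ = c * #(V' i) := by simp [hφ, mul_comm]

end Pullback

theorem IsHamPartition.pullback {m n n' : ℕ} {V' : Fin m → Finset (Fin n' → Fin m)}
    (h : IsHamPartition V') (φ : (Fin n → Fin m) → Fin n' → Fin m) :
    IsHamPartition (pullbackPartition φ V') := by
  refine ⟨fun i j hij => disjoint_filter.mpr fun x _ hi hj => disjoint_left.mp (h.1 hij) hi hj,
    fun x => ?_⟩
  obtain ⟨i, hi⟩ := h.2 (φ x)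
  exact ⟨i, by simpa [pullbackPartition] using hi⟩

theorem imbalance_pullbackPartition {m n n' : ℕ} {φ : (Fin n → Fin m) → Fin n' → Fin m}
    (hφ : ∀ z, #{x | φ x = z} = m ^ (n - n')) (hn' : 1 ≤ n') (hn'n : n' ≤ n)
    (V' : Fin m → Finset (Fin n' → Fin m)) :
    imbalance (pullbackPartition φ V') = (m : ℤ) ^ (n - n') * imbalance V' := by
  have hpow : (m : ℤ) ^ (n - 1) = m ^ (n - n') * m ^ (n' - 1) := by
    rw [← pow_add]
    congr 1
    omega
  simp only [imbalance, card_pullbackPartition hφ, mul_sum, hpow, Nat.cast_mul, Nat.cast_pow,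
    ← mul_sub, abs_mul, abs_pow, Nat.abs_cast]

theorem degIn_pullbackPartition_blockSum_le {m n n' k : ℕ} [NeZero m] {b : Fin n → Fin n'}
    (hfib : ∀ j, #{t | b t = j} ≤ k) (V' : Fin m → Finset (Fin n' → Fin m)) (i : Fin m)
    (x : Fin n → Fin m) :
    degIn (pullbackPartition (blockSum b) V' i) x ≤ k * degIn (V' i) (blockSum b x) := by
  rw [degIn, pullbackPartition, filter_filter]
  exact card_neighbors_blockSum_mem_le hfib (V' i) x

theorem lifting_partitions_general (m n d d' : ℕ) (hm : 2 ≤ m) (hdn : d ≤ n)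
    (hd'1 : 1 ≤ d') (hd'd : d' ≤ d)
    (n' : ℕ) (hn' : n' = (n + d / d' - 1) / (d / d'))
    (i' : ℤ)
    (V' : Fin m → Finset (Fin n' → Fin m))
    (hpart' : IsHamPartition V')
    (hdeg' : ∀ i, ∀ x ∈ V' i, degIn (V' i) x ≤ d')
    (himb' : i' ≤ imbalance V') :
    ∃ V : Fin m → Finset (Fin n → Fin m), IsHamPartition V ∧
      (∀ i, ∀ x ∈ V i, degIn (V i) x ≤ d) ∧
      (m : ℤ) ^ (n - n') * i' ≤ imbalance V := by
  have : NeZero m := ⟨by omega⟩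
  obtain ⟨b, hb, hfib⟩ :
      ∃ b : Fin n → Fin n', Surjective b ∧ ∀ j, #{t | b t = j} ≤ d / d' :=
    hn' ▸ exists_surjective_card_fiber_le n (Nat.div_pos hd'd hd'1)
  have hn'n : n' ≤ n := by simpa using Fintype.card_le_of_surjective b hb
  have hn'pos : 1 ≤ n' := Fin.pos (b ⟨0, by omega⟩)
  have hfiber : ∀ z, #{x : Fin n → Fin m | blockSum b x = z} = m ^ (n - n') := by
    simpa using card_blockSum_fiber (G := Fin m) hb
  refine ⟨pullbackPartition (blockSum b) V', hpart'.pullback _, fun i x hx => ?_, ?_⟩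
  · calc degIn (pullbackPartition (blockSum b) V' i) x
        ≤ d / d' * degIn (V' i) (blockSum b x) := degIn_pullbackPartition_blockSum_le hfib V' i x
      _ ≤ d / d' * d' := Nat.mul_le_mul_left _ (hdeg' i _ (mem_filter.mp hx).2)
      _ ≤ d := Nat.div_mul_le_self d d'
  · rw [imbalance_pullbackPartition hfiber hn'pos hn'n]
    exact mul_le_mul_of_nonneg_left himb' (by positivity)

/-- Lifting lemma: let `m ≥ 2`, `n ≥ d ≥ 1`, `1 ≤ d' ≤ d` and
`n' = ⌈n / ⌊d/d'⌋⌉` (here `(n + d/d' - 1) / (d/d')` in natural-number arithmetic).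
If `H(n',m)` admits a partition `Π'` into `m` parts with `Δ(Π') ≤ d'` and `ι(Π') ≥ i'`,
then `H(n,m)` admits a partition `Π` into `m` parts with `Δ(Π) ≤ d` and
`ι(Π) ≥ m^(n-n') · i'`. -/
theorem lifting_partitions (m n d d' : ℕ) (hm : 2 ≤ m) (hd : 1 ≤ d) (hdn : d ≤ n)
    (hd'1 : 1 ≤ d') (hd'd : d' ≤ d)
    (n' : ℕ) (hn' : n' = (n + d / d' - 1) / (d / d'))
    (i' : ℤ)
    (V' : Fin m → Finset (Fin n' → Fin m))
    (hpart' : IsHamPartition V')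
    (hdeg' : ∀ i, ∀ x ∈ V' i, degIn (V' i) x ≤ d')
    (himb' : i' ≤ imbalance V') :
    ∃ V : Fin m → Finset (Fin n → Fin m), IsHamPartition V ∧
      (∀ i, ∀ x ∈ V i, degIn (V i) x ≤ d) ∧
      (m : ℤ) ^ (n - n') * i' ≤ imbalance V :=
  lifting_partitions_general m n d d' hm hdn hd'1 hd'd n' hn' i' V' hpart' hdeg' himb'
end

section
/- Let m ≥ 3 and let d, n be integers with n ≤ d ≤ (m−1)n. Then the Hamming graph H(n,m) has an induced subgraph G on exactly ⌈(d+1)/n⌉·m^{n−1} vertices whose maximum degree satisfies Δ(G) ≤ d. -/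
open Finset

/-! Take `k = ⌊d/n⌋ + 1 ≤ m` and let `S` be the set of words whose coordinate sum in `ℤ/m` lies
in `{0, …, k-1}`. Fixing all but the first coordinate, exactly `k` values of the first one keep
the word in `S`, so `|S| = k·m^(n-1)`. A neighbour of `x ∈ S` changes one coordinate, which
shifts the sum by a nonzero amount; for each coordinate at most `k - 1` new values keep the sum
in the window, so every degree is at most `n(k-1) ≤ d`. -/

variable {ι : Type*} [Fintype ι] [DecidableEq ι]

section Hamming

variable {β : Type*} [DecidableEq β]

theorem exists_eq_update_of_hammingDist_eq_one {x y : ι → β} (h : hammingDist x y = 1) :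
    ∃ i, y i ≠ x i ∧ y = Function.update x i (y i) := by
  obtain ⟨i, hi⟩ := card_eq_one.mp h
  have hdiff : ∀ j, x j ≠ y j ↔ j = i := fun j => by simpa using Finset.ext_iff.mp hi j
  refine ⟨i, fun hxy => (hdiff i).2 rfl hxy.symm, funext fun j => ?_⟩
  by_cases hj : j = i
  · subst hj
    simp
  · rw [Function.update_of_ne hj]
    by_contra hne
    exact hj ((hdiff j).1 (Ne.symm hne))

theorem card_filter_hammingDist_eq_one_le [Fintype β] (S : Finset (ι → β)) (x : ι → β) :
    #{y ∈ S | hammingDist x y = 1} ≤ ∑ i, #{b | b ≠ x i ∧ Function.update x i b ∈ S} := by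
  set T : ι → Finset β := fun i => {b | b ≠ x i ∧ Function.update x i b ∈ S}
  calc #{y ∈ S | hammingDist x y = 1}
      ≤ #(univ.biUnion fun i => (T i).image (Function.update x i)) := by
        refine card_le_card fun y hy => ?_
        obtain ⟨hyS, hxy⟩ := mem_filter.mp hy
        obtain ⟨i, hyi, hy⟩ := exists_eq_update_of_hammingDist_eq_one hxy
        simp only [T, mem_biUnion, mem_univ, true_and, mem_image, mem_filter]
        exact ⟨i, y i, ⟨hyi, hy ▸ hyS⟩, hy.symm⟩
    _ ≤ ∑ i, #((T i).image (Function.update x i)) := card_biUnion_le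
    _ ≤ ∑ i, #(T i) := sum_le_sum fun i _ => card_image_le

end Hamming

section SumLevelSet

variable {G : Type*} [AddCommGroup G]

theorem sum_update_eq_sub_add (x : ι → G) (i : ι) (b : G) :
    ∑ j, Function.update x i b j = b - x i + ∑ j, x j := by
  rw [sum_update_of_mem (mem_univ i), ← add_sum_erase univ x (mem_univ i),
    sdiff_singleton_eq_erase]
  abel

variable [Fintype G] [DecidableEq G]

theorem card_filter_sum_mem (A : Finset G) (n : ℕ) :
    #{x : Fin (n + 1) → G | ∑ i, x i ∈ A} = #A * Fintype.card G ^ n := by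
  have hcard :
      #{x : Fin (n + 1) → G | ∑ i, x i ∈ A} = #(A ×ˢ (univ : Finset (Fin n → G))) := by
    refine card_nbij' (fun x => (∑ i, x i, Fin.tail x))
      (fun p => Fin.cons (p.1 - ∑ i, p.2 i) p.2) ?_ ?_ ?_ ?_
    · intro x hx
      simpa using hx
    · intro p hp
      simpa [Fin.sum_cons] using hp
    · intro x _
      simp [Fin.sum_univ_succ, Fin.tail]
    · intro p _
      simp [Fin.sum_cons]
  rw [hcard, card_product, card_univ, Fintype.card_fun, Fintype.card_fin]

theorem card_filter_update_sum_mem (A : Finset G) {x : ι → G} (hx : ∑ j, x j ∈ A) (i : ι) :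
    #{b | b ≠ x i ∧ ∑ j, Function.update x i b j ∈ A} = #A - 1 := by
  rw [← card_erase_of_mem hx]
  refine card_nbij' (fun b => b - x i + ∑ j, x j) (fun a => a - ∑ j, x j + x i) ?_ ?_ ?_ ?_
  · intro b hb
    simp only [coe_filter, mem_univ, true_and, Set.mem_ofPred_eq, sum_update_eq_sub_add,
      mem_coe, mem_erase] at hb ⊢
    exact ⟨fun h => hb.1 (by simpa [sub_eq_zero] using h), hb.2⟩
  · intro a ha
    simp only [coe_filter, mem_univ, true_and, Set.mem_ofPred_eq, sum_update_eq_sub_add,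
      mem_coe, mem_erase] at ha ⊢
    exact ⟨fun h => ha.1 (by simpa [sub_eq_zero] using h), by simpa using ha.2⟩
  · intro b _
    simp
  · intro a _
    simp

theorem card_filter_hammingDist_eq_one_le_of_sum_mem (A : Finset G) {x : ι → G}
    (hx : ∑ j, x j ∈ A) :
    #{y ∈ ({y | ∑ j, y j ∈ A} : Finset (ι → G)) | hammingDist x y = 1}
      ≤ Fintype.card ι * (#A - 1) := by
  calc _ ≤ ∑ i, #{b | b ≠ x i ∧ Function.update x i b ∈ ({y | ∑ j, y j ∈ A} : Finset _)} :=
        card_filter_hammingDist_eq_one_le _ x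
    _ = ∑ _i : ι, (#A - 1) := by
        simp only [mem_filter, mem_univ, true_and, card_filter_update_sum_mem A hx]
    _ = Fintype.card ι * (#A - 1) := by rw [sum_const, card_univ, smul_eq_mul]

end SumLevelSet

theorem large_subgraph_small_degree'_general (m d n : ℕ) (hnd : n ≤ d)
    (hdmn : d ≤ (m - 1) * n) (hn : 1 ≤ n) :
    ∃ S : Finset (Fin n → Fin m),
      S.card = ((d + n) / n) * m ^ (n - 1) ∧
      ∀ x ∈ S, degIn S x ≤ d := by
  obtain ⟨n, rfl⟩ : ∃ n', n = n' + 1 := ⟨n - 1, by omega⟩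
  have hm : m ≠ 0 := by
    rintro rfl
    rw [Nat.zero_sub, zero_mul] at hdmn
    omega
  have : NeZero m := ⟨hm⟩
  have hk : d / (n + 1) + 1 ≤ m := by
    have := Nat.div_le_of_le_mul (mul_comm (m - 1) (n + 1) ▸ hdmn)
    omega
  let A : Finset (Fin m) := univ.map (Fin.castLEEmb hk)
  have hA : #A = d / (n + 1) + 1 := by simp [A]
  refine ⟨({x | ∑ i, x i ∈ A} : Finset (Fin (n + 1) → Fin m)), ?_, fun x hx => ?_⟩
  · rw [card_filter_sum_mem, hA, Nat.add_div_right _ n.succ_pos, Fintype.card_fin,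
      Nat.add_sub_cancel]
  · calc degIn _ x ≤ Fintype.card (Fin (n + 1)) * (#A - 1) :=
          card_filter_hammingDist_eq_one_le_of_sum_mem A (mem_filter.mp hx).2
      _ ≤ d := by simpa [hA] using Nat.mul_div_le d (n + 1)

/-- Let `m ≥ 3` and `n ≤ d ≤ (m-1)n`. Then `H(n,m)` has an induced subgraph on exactly
`⌈(d+1)/n⌉ · m^(n-1)` vertices (note `⌈(d+1)/n⌉ = (d+n)/n` in natural-number division)
with maximum degree at most `d`. -/
theorem large_subgraph_small_degree' (m d n : ℕ) (hm : 3 ≤ m) (hnd : n ≤ d)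
    (hdmn : d ≤ (m - 1) * n) (hn : 1 ≤ n) :
    ∃ S : Finset (Fin n → Fin m),
      S.card = ((d + n) / n) * m ^ (n - 1) ∧
      ∀ x ∈ S, degIn S x ≤ d :=
  large_subgraph_small_degree'_general m d n hnd hdmn hn
end

section
/- Let m ≥ 3 and n ≥ 1 be integers. Then every induced subgraph G of the Hamming graph H(n,m) on more than (1/2)·m^n vertices has maximum degree Δ(G) ≥ √((m−1)n/2). -/
open Finset

/-! The line through `x` in direction `i` is the fibre of `x` under forgetting coordinate `i`, and
there are `m^(n-1)` such lines. By Cauchy–Schwarz, the ordered pairs of points of `S` on a common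
line in direction `i` number at least `|S|^2 / m^(n-1)`; each such pair is either a diagonal pair
`(x, x)` or an edge of `G[S]`. Summing over directions gives `m n |S|^2 ≤ m^n Σ_{x∈S} (deg x + n)`, so
`|S| > m^n / 2` forces `2Δ + 2n > m n`. This linear bound dominates `√((m-1)n/2)` when `m ≥ 3`. -/

theorem sq_card_le_card_image_mul_sum_card_fiber {β γ : Type*} [DecidableEq γ] (f : β → γ)
    (S : Finset β) : #S ^ 2 ≤ #(S.image f) * ∑ x ∈ S, #{y ∈ S | f y = f x} := by
  have hfiber : ∑ b ∈ S.image f, #{y ∈ S | f y = b} ^ 2 = ∑ x ∈ S, #{y ∈ S | f y = f x} :=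
    sum_image' _ fun x _ => by
      rw [sum_congr rfl fun y hy => by rw [(mem_filter.1 hy).2], sum_const, smul_eq_mul, sq]
  calc #S ^ 2 = (∑ b ∈ S.image f, #{y ∈ S | f y = b}) ^ 2 := by
        rw [← card_eq_sum_card_image]
    _ ≤ _ := hfiber ▸ sq_sum_le_card_mul_sum_sq

section Hamming

variable {ι α : Type*} [Fintype ι] [DecidableEq ι] [DecidableEq α]

theorem card_mul_card_image_restrict_ne_le [Fintype α] (S : Finset (ι → α)) (i : ι) :
    Fintype.card α * #(S.image (Subtype.restrict (· ≠ i))) ≤ Fintype.card α ^ Fintype.card ι :=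
  calc Fintype.card α * #(S.image (Subtype.restrict (· ≠ i)))
      ≤ Fintype.card α * Fintype.card ({j // j ≠ i} → α) :=
        Nat.mul_le_mul_left _ (card_le_univ _)
    _ = Fintype.card α ^ Fintype.card ι := by
      rw [← Fintype.card_prod, ← Fintype.card_congr (Equiv.funSplitAt i α), Fintype.card_fun]

theorem card_filter_restrict_ne_eq_le_of_ne {x y : ι → α} (hxy : x ≠ y) :
    #{i | Subtype.restrict (· ≠ i) y = Subtype.restrict (· ≠ i) x} ≤
      if hammingDist x y = 1 then 1 else 0 := by
  have disagree_eq : ∀ i, Subtype.restrict (· ≠ i) y = Subtype.restrict (· ≠ i) x →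
      ∀ j, x j ≠ y j → j = i :=
    fun i h j hj => by_contra fun hji => hj (congrFun h ⟨j, hji⟩).symm
  obtain ⟨k, hk⟩ := Function.ne_iff.1 hxy
  split_ifs with hdist
  · refine (card_le_card fun i hi => ?_).trans (card_singleton k).le
    exact mem_singleton.2 (disagree_eq i (mem_filter.1 hi).2 k hk).symm
  · refine Nat.le_zero.2 (card_eq_zero.2 (eq_empty_of_forall_notMem fun i hi => hdist ?_))
    have hi := disagree_eq i (mem_filter.1 hi).2
    refine card_eq_one.2 ⟨i, eq_singleton_iff_unique_mem.2 ⟨?_, fun j hj => ?_⟩⟩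
    · exact mem_filter.2 ⟨mem_univ _, hi k hk ▸ hk⟩
    · exact hi j (mem_filter.1 hj).2

theorem sum_card_filter_restrict_ne_eq_le (S : Finset (ι → α)) (x : ι → α) :
    ∑ i, #{y ∈ S | Subtype.restrict (· ≠ i) y = Subtype.restrict (· ≠ i) x} ≤
      #{y ∈ S | hammingDist x y = 1} + Fintype.card ι := by
  calc ∑ i, #{y ∈ S | Subtype.restrict (· ≠ i) y = Subtype.restrict (· ≠ i) x}
      = ∑ y ∈ S, #{i | Subtype.restrict (· ≠ i) y = Subtype.restrict (· ≠ i) x} := by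
        simp only [card_filter]; exact sum_comm
    _ ≤ ∑ y ∈ S,
          ((if hammingDist x y = 1 then 1 else 0) + if x = y then Fintype.card ι else 0) := by
        refine sum_le_sum fun y _ => ?_
        by_cases hxy : x = y
        · simp [hxy]
        · simpa [hxy] using card_filter_restrict_ne_eq_le_of_ne hxy
    _ ≤ #{y ∈ S | hammingDist x y = 1} + Fintype.card ι := by
        rw [sum_add_distrib, ← card_filter, sum_ite_eq]
        split_ifs <;> simp

theorem card_mul_card_mul_sq_card_le_sum_card_hammingDist_eq_one [Fintype α]
    (S : Finset (ι → α)) :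
    Fintype.card α * Fintype.card ι * #S ^ 2 ≤
      Fintype.card α ^ Fintype.card ι *
        ∑ x ∈ S, (#{y ∈ S | hammingDist x y = 1} + Fintype.card ι) := by
  calc Fintype.card α * Fintype.card ι * #S ^ 2 = ∑ _i : ι, Fintype.card α * #S ^ 2 := by
        rw [sum_const, card_univ, smul_eq_mul]; ring
    _ ≤ ∑ i : ι, Fintype.card α * #(S.image (Subtype.restrict (· ≠ i))) *
          ∑ x ∈ S, #{y ∈ S | Subtype.restrict (· ≠ i) y = Subtype.restrict (· ≠ i) x} := by
        refine sum_le_sum fun i _ => ?_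
        rw [mul_assoc]
        exact Nat.mul_le_mul_left _ (sq_card_le_card_image_mul_sum_card_fiber _ S)
    _ ≤ ∑ i : ι, Fintype.card α ^ Fintype.card ι *
          ∑ x ∈ S, #{y ∈ S | Subtype.restrict (· ≠ i) y = Subtype.restrict (· ≠ i) x} := by
        gcongr with i
        exact card_mul_card_image_restrict_ne_le S i
    _ = Fintype.card α ^ Fintype.card ι *
          ∑ x ∈ S, ∑ i, #{y ∈ S | Subtype.restrict (· ≠ i) y = Subtype.restrict (· ≠ i) x} := by
        rw [← mul_sum, sum_comm]
    _ ≤ _ := by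
        gcongr with x
        exact sum_card_filter_restrict_ne_eq_le S x

end Hamming

theorem le_sq_of_mul_lt_two_mul_add {m n D : ℕ} (hm : 3 ≤ m) (h : n * m < 2 * (D + n)) :
    ((m : ℝ) - 1) * n / 2 ≤ D ^ 2 := by
  have h' : (n : ℝ) * m + 1 ≤ 2 * (D + n) := by exact_mod_cast h
  have hm' : (3 : ℝ) ≤ m := by exact_mod_cast hm
  nlinarith [sq_nonneg ((D : ℝ) - 1), mul_nonneg (Nat.cast_nonneg n) (sub_nonneg.2 hm')]

/-- Let `m ≥ 3` and `n ≥ 1`. Every induced subgraph of `H(n,m)` on more than `(1/2)·m^n`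
vertices has maximum degree at least `√((m-1)n/2)`. -/
theorem maxDegree_of_majority_subgraph (m n : ℕ) (hm : 3 ≤ m) (hn : 1 ≤ n)
    (S : Finset (Fin n → Fin m))
    (hcard : (1 / 2 : ℝ) * (m : ℝ) ^ n < S.card) :
    ∃ x ∈ S, Real.sqrt (((m : ℝ) - 1) * n / 2) ≤ (degIn S x : ℝ) := by
  have hmaj : m ^ n < 2 * #S := by
    exact_mod_cast (by push_cast; linarith : ((m ^ n : ℕ) : ℝ) < 2 * #S)
  obtain ⟨x, hxS, hmax⟩ := S.exists_max_image (degIn S) (card_pos.1 (by omega))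
  refine ⟨x, hxS, Real.sqrt_le_iff.2 ⟨by positivity, le_sq_of_mul_lt_two_mul_add hm ?_⟩⟩
  have hsum : ∑ y ∈ S, (degIn S y + n) ≤ #S * (degIn S x + n) := by
    simpa using sum_le_sum fun y hy => Nat.add_le_add_right (hmax y hy) n
  have hedge := card_mul_card_mul_sq_card_le_sum_card_hammingDist_eq_one S
  simp only [Fintype.card_fin] at hedge
  have hS : 0 < #S := card_pos.2 ⟨x, hxS⟩
  have hcount : #S * (n * m) ≤ m ^ n * (degIn S x + n) := by
    refine Nat.le_of_mul_le_mul_left ?_ hS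
    nlinarith [hedge.trans (Nat.mul_le_mul_left (m ^ n) hsum)]
  refine Nat.lt_of_mul_lt_mul_left (a := #S) ?_
  calc #S * (n * m) ≤ m ^ n * (degIn S x + n) := hcount
    _ < 2 * #S * (degIn S x + n) := Nat.mul_lt_mul_of_pos_right hmaj (by omega)
    _ = #S * (2 * (degIn S x + n)) := by ring
end

section
/- Let A ⊂ ℝ be a finite set with |A| = m ≥ 2, let n ≥ 1, and let f : A^n → {0,1} be a function of degree d. Then there exist two-element subsets A_1, …, A_n ⊆ A such that the restriction of f to A_1 × ⋯ × A_n has degree at least ⌈d/(m−1)⌉. -/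
/-!
Let `p` represent `f` on `Aⁿ` with minimal degree `d`. Reducing `p` modulo the polynomials
`∏_{a ∈ A} (Xᵢ - a)`, which vanish on `Aⁿ`, we may assume all its exponents are `< m`; then a
monomial `X^e` of top degree involves a set `S` of at least `d / (m - 1)` variables.
The mixed difference `Δ(a, b) = ∑_{T ⊆ S} (-1)^|T| p(a with the coordinates in T taken from b)`
is a polynomial in `(a, b)` of the same degree, in which the monomial `a^e` keeps its coefficient,
so by the Combinatorial Nullstellensatz `Δ(a, b) ≠ 0` for some `a, b ∈ Aⁿ`. This forces
`aᵢ ≠ bᵢ` on `S`, and as `Δ` annihilates every polynomial of degree `< |S|`, the restriction of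
`f` to the cube `∏ {aᵢ, bᵢ}` has degree at least `|S|`.
-/

open Finset MvPolynomial

/-- The degree of a function `f` defined on `(Asets 1) × ⋯ × (Asets n) ⊆ ℝⁿ`: the minimum
total degree of a polynomial `p ∈ ℝ[x₁,…,xₙ]` with `p(a) = f(a)` for all `a` in the domain. -/
noncomputable def fdeg {n : ℕ} (Asets : Fin n → Finset ℝ) (f : (Fin n → ℝ) → ℝ) : ℕ :=
  sInf {k | ∃ p : MvPolynomial (Fin n) ℝ, p.totalDegree = k ∧
    ∀ x : Fin n → ℝ, (∀ i, x i ∈ Asets i) → MvPolynomial.eval x p = f x}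

namespace MvPolynomial

variable {R σ : Type*} [CommRing R]

open MonomialOrder in
theorem exists_exponents_lt_card_eval_eq [Nontrivial R] [Finite σ] (A : Finset R)
    (p : MvPolynomial σ R) :
    ∃ r : MvPolynomial σ R, (∀ c ∈ r.support, ∀ i, c i < #A) ∧
      ∀ x : σ → R, (∀ i, x i ∈ A) → eval x r = eval x p := by
  let _ : LinearOrder σ := WellOrderingRel.isWellOrder.linearOrder
  have hmonic (i : σ) (a : R) : degLex.Monic (X i - C a : MvPolynomial σ R) :=
    degLex.monic_X_sub_C i a
  obtain ⟨g, r, hpr, -, hr⟩ := degLex.div (b := fun i ↦ ∏ a ∈ A, (X i - C a))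
    (fun i ↦ by rw [(Monic.prod fun a _ ↦ hmonic i a).leadingCoeff_eq_one]; exact isUnit_one) p
  refine ⟨r, fun c hc i ↦ ?_, fun x hx ↦ ?_⟩
  · have := hr c hc i
    rw [degree_prod_of_regular fun a _ ↦ by
      rw [(hmonic i a).leadingCoeff_eq_one]; exact isRegular_one] at this
    simpa [degLex.degree_X_sub_C, Finsupp.single_le_iff] using this
  · rw [hpr, map_add, Finsupp.linearCombination_apply, map_finsuppSum, right_eq_add]
    refine Finset.sum_eq_zero fun i _ ↦ ?_
    simp only [smul_eq_mul, map_mul, map_prod]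
    rw [Finset.prod_eq_zero (hx i) (by simp), mul_zero]

end MvPolynomial

section MixedDiff

variable {ι R : Type*} [DecidableEq ι] [CommRing R]

def mixedDiff (S : Finset ι) (a b : ι → R) (g : (ι → R) → R) : R :=
  ∑ T ∈ S.powerset, (-1) ^ #T * g (T.piecewise b a)

variable {S : Finset ι} {a b : ι → R} {g : (ι → R) → R} {i : ι}

theorem mixedDiff_congr {g' : (ι → R) → R}
    (h : ∀ T ⊆ S, g (T.piecewise b a) = g' (T.piecewise b a)) :
    mixedDiff S a b g = mixedDiff S a b g' :=
  sum_congr rfl fun T hT ↦ by rw [h T (mem_powerset.mp hT)]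

theorem mixedDiff_sum {κ : Type*} (s : Finset κ) (g : κ → (ι → R) → R) :
    mixedDiff S a b (fun x ↦ ∑ k ∈ s, g k x) = ∑ k ∈ s, mixedDiff S a b (g k) := by
  simp only [mixedDiff, mul_sum]
  exact sum_comm

theorem mixedDiff_insert (hi : i ∉ S) :
    mixedDiff (insert i S) a b g =
      mixedDiff S a b g - mixedDiff S (Function.update a i (b i)) b g := by
  rw [mixedDiff, sum_powerset_insert hi, sub_eq_add_neg, mixedDiff, mixedDiff, ← sum_neg_distrib]
  congr 1
  refine sum_congr rfl fun T hT ↦ ?_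
  have hiT : i ∉ T := fun h ↦ hi (mem_powerset.mp hT h)
  rw [card_insert_of_notMem hiT, piecewise_insert, update_piecewise_of_notMem _ _ _ hiT, pow_succ]
  ring

theorem mixedDiff_eq_zero_of_eq (hi : i ∈ S) (hab : a i = b i) : mixedDiff S a b g = 0 := by
  rw [← insert_erase hi, mixedDiff_insert (notMem_erase i S), ← hab, Function.update_eq_self,
    sub_self]

theorem mixedDiff_eq_zero_of_update_eq (hi : i ∈ S)
    (hg : ∀ (x : ι → R) (t : R), g (Function.update x i t) = g x) : mixedDiff S a b g = 0 := by
  rw [← insert_erase hi, mixedDiff_insert (notMem_erase i S), sub_eq_zero]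
  refine sum_congr rfl fun T hT ↦ ?_
  have hiT : i ∉ T := fun h ↦ notMem_erase i S (mem_powerset.mp hT h)
  rw [← update_piecewise_of_notMem _ _ _ hiT, hg]

theorem mixedDiff_eval_eq_zero (q : MvPolynomial ι R) (hq : q.totalDegree < #S) :
    mixedDiff S a b (fun x ↦ eval x q) = 0 := by
  have hq_sum : (fun x ↦ eval x q) = fun x ↦ ∑ c ∈ q.support, eval x (monomial c (coeff c q)) :=
    funext fun x ↦ by rw [← map_sum, ← as_sum]
  rw [hq_sum, mixedDiff_sum]
  refine sum_eq_zero fun c hc ↦ ?_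
  obtain ⟨i, hiS, hci⟩ : ∃ i ∈ S, c i = 0 := by
    by_contra! h
    refine hq.not_ge ?_
    calc #S = ∑ _i ∈ S, 1 := card_eq_sum_ones S
      _ ≤ ∑ i ∈ S, c i := sum_le_sum fun i hi ↦ Nat.one_le_iff_ne_zero.mpr (h i hi)
      _ ≤ c.degree := sum_le_sum_of_subset fun i hi ↦ Finsupp.mem_support_iff.mpr (h i hi)
      _ ≤ q.totalDegree := le_totalDegree hc
  refine mixedDiff_eq_zero_of_update_eq hiS fun x t ↦ ?_
  simp only [eval_monomial, Finsupp.prod]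
  congr 1
  refine prod_congr rfl fun j hj ↦ ?_
  rw [Function.update_of_ne]
  rintro rfl
  exact Finsupp.mem_support_iff.mp hj hci

end MixedDiff

section MixedDiffPoly

variable {ι R : Type*} [DecidableEq ι] [CommRing R]

noncomputable def mixedDiffPoly (S : Finset ι) (p : MvPolynomial ι R) : MvPolynomial (ι ⊕ ι) R :=
  ∑ T ∈ S.powerset, C ((-1) ^ #T) * rename (T.piecewise Sum.inr Sum.inl) p

variable {S : Finset ι} {p : MvPolynomial ι R}

theorem eval_mixedDiffPoly (a b : ι → R) :
    eval (Sum.elim a b) (mixedDiffPoly S p) = mixedDiff S a b (fun x ↦ eval x p) := by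
  simp only [mixedDiffPoly, mixedDiff, map_sum, map_mul, eval_C, eval_rename]
  refine sum_congr rfl fun T _ ↦ ?_
  have : Sum.elim a b ∘ T.piecewise Sum.inr Sum.inl = T.piecewise b a :=
    funext fun j ↦ by by_cases hj : j ∈ T <;> simp [hj]
  rw [this]

theorem totalDegree_mixedDiffPoly_le : (mixedDiffPoly S p).totalDegree ≤ p.totalDegree := by
  refine (totalDegree_finsetSum _ _).trans (Finset.sup_le fun T _ ↦ ?_)
  refine (totalDegree_mul _ _).trans ?_
  rw [totalDegree_C, zero_add]
  exact totalDegree_rename_le _ _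

theorem coeff_mapDomain_inl_mixedDiffPoly {e : ι →₀ ℕ} (he : S ⊆ e.support) :
    coeff (e.mapDomain Sum.inl) (mixedDiffPoly S p) = coeff e p := by
  rw [mixedDiffPoly, coeff_sum, sum_eq_single_of_mem ∅ (empty_mem_powerset S)]
  · rw [piecewise_empty, coeff_C_mul, coeff_rename_mapDomain _ Sum.inl_injective]
    simp
  intro T hT hT0
  obtain ⟨i, hi⟩ := nonempty_iff_ne_empty.mpr hT0
  rw [coeff_C_mul, coeff_rename_eq_zero, mul_zero]
  intro u hu
  have hinl : (Sum.inl i : ι ⊕ ι) ∉ Set.range (T.piecewise Sum.inr Sum.inl) := by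
    rintro ⟨j, hj⟩
    by_cases hjT : j ∈ T
    · simp [hjT] at hj
    · rw [piecewise_eq_of_notMem _ _ _ hjT, Sum.inl.injEq] at hj
      exact hjT (hj ▸ hi)
  have := congrArg (· (Sum.inl i)) hu
  simp only [Finsupp.mapDomain_of_notMem_range _ _ hinl,
    Finsupp.mapDomain_apply Sum.inl_injective] at this
  exact absurd this.symm (Finsupp.mem_support_iff.mp (he (mem_powerset.mp hT hi)))

theorem exists_mixedDiff_eval_ne_zero [IsDomain R] [Finite ι] (A : Finset R) {e : ι →₀ ℕ}
    (he : e ∈ p.support) (he_deg : e.degree = p.totalDegree) (heA : ∀ i, e i < #A) :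
    ∃ a b : ι → R, (∀ i, a i ∈ A) ∧ (∀ i, b i ∈ A) ∧
      mixedDiff e.support a b (fun x ↦ eval x p) ≠ 0 := by
  have hcoeff : coeff (e.mapDomain Sum.inl) (mixedDiffPoly e.support p) ≠ 0 := by
    rw [coeff_mapDomain_inl_mixedDiffPoly subset_rfl]
    exact mem_support_iff.mp he
  obtain ⟨v, hv, hv0⟩ := combinatorial_nullstellensatz_exists_eval_nonzero
    (mixedDiffPoly e.support p) (e.mapDomain Sum.inl) hcoeff
    (le_antisymm (by simpa [he_deg] using totalDegree_mixedDiffPoly_le)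
      (le_totalDegree (mem_support_iff.mpr hcoeff)))
    (fun _ ↦ A) (fun s ↦ by
      rcases s with i | i
      · simpa [Finsupp.mapDomain_apply Sum.inl_injective] using heA i
      · rw [Finsupp.mapDomain_of_notMem_range _ _ (by simp)]
        exact Nat.zero_lt_of_lt (heA i))
  refine ⟨v ∘ Sum.inl, v ∘ Sum.inr, fun i ↦ hv _, fun i ↦ hv _, ?_⟩
  rwa [← eval_mixedDiffPoly, Sum.elim_comp_inl_inr]

end MixedDiffPoly

section Fdeg

variable {n : ℕ} {Asets : Fin n → Finset ℝ} {f : (Fin n → ℝ) → ℝ} {p : MvPolynomial (Fin n) ℝ}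

theorem fdeg_le_totalDegree (hp : ∀ x : Fin n → ℝ, (∀ i, x i ∈ Asets i) → eval x p = f x) :
    fdeg Asets f ≤ p.totalDegree :=
  Nat.sInf_le ⟨p, rfl, hp⟩

theorem exists_eval_eq_of_fdeg_ne_zero (h : fdeg Asets f ≠ 0) :
    ∃ p : MvPolynomial (Fin n) ℝ, ∀ x : Fin n → ℝ, (∀ i, x i ∈ Asets i) → eval x p = f x := by
  obtain ⟨_, p, -, hp⟩ := Nat.nonempty_of_pos_sInf (Nat.pos_of_ne_zero h)
  exact ⟨p, hp⟩

theorem card_le_fdeg_of_mixedDiff_ne_zero {S : Finset (Fin n)} {a b : Fin n → ℝ}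
    (hp : ∀ x : Fin n → ℝ, (∀ i, x i ∈ Asets i) → eval x p = f x)
    (hS : ∀ T ⊆ S, ∀ i, T.piecewise b a i ∈ Asets i)
    (h : mixedDiff S a b (fun x ↦ eval x p) ≠ 0) : #S ≤ fdeg Asets f := by
  refine le_csInf ⟨_, p, rfl, hp⟩ ?_
  rintro _ ⟨q, rfl, hq⟩
  by_contra! hlt
  refine h ?_
  rw [mixedDiff_congr (g' := fun x ↦ eval x q)
    fun T hT ↦ (hp _ (hS T hT)).trans (hq _ (hS T hT)).symm]
  exact mixedDiff_eval_eq_zero q hlt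

theorem exists_pairs_card_le_fdeg {A : Finset ℝ} (hA : 2 ≤ #A) {S : Finset (Fin n)}
    {a b : Fin n → ℝ} (ha : ∀ i, a i ∈ A) (hb : ∀ i, b i ∈ A)
    (hp : ∀ x : Fin n → ℝ, (∀ i, x i ∈ A) → eval x p = f x)
    (h : mixedDiff S a b (fun x ↦ eval x p) ≠ 0) :
    ∃ Asets : Fin n → Finset ℝ, (∀ i, Asets i ⊆ A ∧ #(Asets i) = 2) ∧ #S ≤ fdeg Asets f := by
  have hab : ∀ i ∈ S, a i ≠ b i := fun i hi hab ↦ h (mixedDiff_eq_zero_of_eq hi hab)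
  choose y hyA hya using fun i ↦ exists_mem_ne (by omega : 1 < #A) (a i)
  set c : Fin n → ℝ := fun i ↦ if i ∈ S then b i else y i
  have hcA : ∀ i, c i ∈ A := fun i ↦ by by_cases hi : i ∈ S <;> simp [c, hi, hb, hyA]
  have hca : ∀ i, a i ≠ c i := fun i ↦ by
    by_cases hi : i ∈ S <;> simp [c, hi, hab, (hya i).symm]
  have hsub : ∀ i, ({a i, c i} : Finset ℝ) ⊆ A := fun i ↦ insert_subset (ha i) (by simp [hcA])
  refine ⟨fun i ↦ {a i, c i}, fun i ↦ ⟨hsub i, card_pair (hca i)⟩, ?_⟩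
  refine card_le_fdeg_of_mixedDiff_ne_zero (fun x hx ↦ hp x fun i ↦ hsub i (hx i)) ?_ h
  intro T hT i
  by_cases hi : i ∈ T
  · simp [hi, c, hT hi]
  · simp [hi]

end Fdeg

theorem restriction_degree_general (m n : ℕ) (A : Finset ℝ) (hA : A.card = m) (hm : 2 ≤ m)
    (f : (Fin n → ℝ) → ℝ)
    (d : ℕ) (hd : fdeg (fun _ => A) f = d) :
    ∃ Asets : Fin n → Finset ℝ,
      (∀ i, Asets i ⊆ A ∧ (Asets i).card = 2) ∧
      (d + (m - 1) - 1) / (m - 1) ≤ fdeg Asets f := by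
  subst hA
  rcases Nat.eq_zero_or_pos d with rfl | hd_pos
  · obtain ⟨P, hPA, hP⟩ := exists_subset_card_eq hm
    exact ⟨fun _ ↦ P, fun _ ↦ ⟨hPA, hP⟩, by rw [Nat.div_eq_of_lt (by omega)]; exact Nat.zero_le _⟩
  obtain ⟨p, hp⟩ := exists_eval_eq_of_fdeg_ne_zero (hd ▸ hd_pos.ne')
  obtain ⟨r, hr_lt, hr⟩ := exists_exponents_lt_card_eval_eq A p
  have hr_rep : ∀ x : Fin n → ℝ, (∀ i, x i ∈ A) → eval x r = f x :=
    fun x hx ↦ (hr x hx).trans (hp x hx)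
  have hdr : d ≤ r.totalDegree := hd ▸ fdeg_le_totalDegree hr_rep
  have hr0 : r ≠ 0 := by rintro rfl; rw [totalDegree_zero] at hdr; omega
  obtain ⟨e, he, he_deg⟩ : ∃ e ∈ r.support, r.totalDegree = e.degree :=
    exists_mem_eq_sup _ (support_nonempty.mpr hr0) _
  obtain ⟨a, b, ha, hb, hab⟩ := exists_mixedDiff_eval_ne_zero A he he_deg.symm (hr_lt e he)
  obtain ⟨Asets, hAsets, hS⟩ := exists_pairs_card_le_fdeg hm ha hb hr_rep hab
  refine ⟨Asets, hAsets, le_trans ?_ hS⟩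
  have hde : d ≤ #e.support * (#A - 1) := by
    refine (hdr.trans he_deg.le).trans ?_
    rw [Finsupp.degree_apply, ← smul_eq_mul]
    exact sum_le_card_nsmul _ _ _ fun i _ ↦ Nat.le_sub_one_of_lt (hr_lt e he i)
  rw [Nat.div_le_iff_le_mul_add_pred (by omega), mul_comm]
  omega

/-- Let `A ⊆ ℝ` with `|A| = m ≥ 2`, `n ≥ 1`, and let `f : Aⁿ → {0,1}` have degree `d`.
Then there are two-element subsets `A₁, …, Aₙ ⊆ A` such that the restriction of `f` to
`A₁ × ⋯ × Aₙ` has degree at least `⌈d/(m-1)⌉` (i.e. `(d + m - 2)/(m-1)` in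
natural-number division). -/
theorem restriction_degree (m n : ℕ) (A : Finset ℝ) (hA : A.card = m) (hm : 2 ≤ m)
    (hn : 1 ≤ n) (f : (Fin n → ℝ) → ℝ)
    (hf : ∀ x : Fin n → ℝ, (∀ i, x i ∈ A) → f x = 0 ∨ f x = 1)
    (d : ℕ) (hd : fdeg (fun _ => A) f = d) :
    ∃ Asets : Fin n → Finset ℝ,
      (∀ i, Asets i ⊆ A ∧ (Asets i).card = 2) ∧
      (d + (m - 1) - 1) / (m - 1) ≤ fdeg Asets f :=
  restriction_degree_general m n A hA hm f d hd
end

section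
/- Let s ≥ 1 be an integer and let P_1, …, P_s be a partition of {1,…,s²} into s blocks each of size s. Define the tribes function f : {0,1}^{s²} → {0,1} by f(x) = max_{i∈[s]} min_{j∈P_i} x_j. Then f has degree s², this degree being attained by the polynomial 1 − ∏_{i∈[s]} (1 − ∏_{j∈P_i} x_j), and f has sensitivity s. -/
open Finset MvPolynomial

open scoped Classical in
/-- The local sensitivity of `f : Aⁿ → ℝ` at `x`: the number of points `y ∈ Aⁿ` differing
from `x` in exactly one coordinate and satisfying `f y ≠ f x`. -/
noncomputable def locSens {n : ℕ} (A : Finset ℝ) (f : (Fin n → ℝ) → ℝ) (x : Fin n → ℝ) : ℕ :=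
  ((Fintype.piFinset fun _ : Fin n => A).filter
    fun y => hammingDist x y = 1 ∧ f y ≠ f x).card

/-- The sensitivity of `f : Aⁿ → ℝ`: the maximum local sensitivity over all `x ∈ Aⁿ`. -/
noncomputable def sens {n : ℕ} (A : Finset ℝ) (f : (Fin n → ℝ) → ℝ) : ℕ :=
  (Fintype.piFinset fun _ : Fin n => A).sup (locSens A f)

/-!
The degree bound is a parity argument. Correlating a function with the top character
`χ(a) = ∏ⱼ (2aⱼ - 1)` over the cube kills every monomial that misses a variable, hence every
polynomial of degree `< n`. For the tribes function, inclusion–exclusion over the blocks writes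
`1 - f` as a signed sum of the monomials `∏_{j ∈ ⋃_{i ∈ t} Pᵢ} xⱼ`, and only `t = univ` covers
every variable, so the correlation of `f` is `±1 ≠ 0`.

For the sensitivity: if some block is all ones, only its coordinates are sensitive; otherwise a
sensitive coordinate is the unique zero of its block, so there is at most one per block. The
indicator of a single block is sensitive exactly on that block.
-/

lemma fdeg_eq_totalDegree {n : ℕ} {A : Fin n → Finset ℝ} {f : (Fin n → ℝ) → ℝ}
    {q : MvPolynomial (Fin n) ℝ} (hq : ∀ x : Fin n → ℝ, (∀ i, x i ∈ A i) → eval x q = f x)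
    (hmin : ∀ p : MvPolynomial (Fin n) ℝ, (∀ x : Fin n → ℝ, (∀ i, x i ∈ A i) → eval x p = f x) →
      q.totalDegree ≤ p.totalDegree) :
    fdeg A f = q.totalDegree :=
  le_antisymm (Nat.sInf_le ⟨q, rfl, hq⟩)
    (le_csInf ⟨_, q, rfl, hq⟩ fun _ ⟨p, hp, hpf⟩ => hp ▸ hmin p hpf)

lemma sens_congr {n : ℕ} {A : Finset ℝ} {f g : (Fin n → ℝ) → ℝ}
    (hfg : ∀ x ∈ Fintype.piFinset fun _ : Fin n => A, f x = g x) : sens A f = sens A g := by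
  refine sup_congr rfl fun x hx => ?_
  unfold locSens
  congr 1
  exact filter_congr fun y hy => by rw [hfg x hx, hfg y hy]

noncomputable def boolCube (n : ℕ) : Finset (Fin n → ℝ) :=
  Fintype.piFinset fun _ => {0, 1}

section Cube

variable {n : ℕ}

lemma mem_boolCube {x : Fin n → ℝ} : x ∈ boolCube n ↔ ∀ j, x j = 0 ∨ x j = 1 := by
  simp [boolCube]

lemma sum_boolCube_prod (u : Fin n → ℝ → ℝ) :
    ∑ a ∈ boolCube n, ∏ j, u j (a j) = ∏ j, (u j 0 + u j 1) := by
  rw [boolCube, sum_prod_piFinset]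
  simp [sum_pair zero_ne_one]

lemma prod_eq_ite_of_mem_boolCube {x : Fin n → ℝ} (hx : x ∈ boolCube n) (S : Finset (Fin n)) :
    ∏ j ∈ S, x j = if ∀ j ∈ S, x j = 1 then 1 else 0 := by
  split_ifs with h
  · exact prod_eq_one h
  · obtain ⟨j, hj, hj1⟩ := not_forall₂.1 h
    exact prod_eq_zero hj ((mem_boolCube.1 hx j).resolve_right hj1)

noncomputable def paritySum (g : (Fin n → ℝ) → ℝ) : ℝ :=
  ∑ a ∈ boolCube n, (∏ j, (2 * a j - 1)) * g a

lemma paritySum_congr {g h : (Fin n → ℝ) → ℝ} (hgh : ∀ a ∈ boolCube n, g a = h a) :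
    paritySum g = paritySum h :=
  sum_congr rfl fun a ha => by rw [hgh a ha]

lemma paritySum_sub (g h : (Fin n → ℝ) → ℝ) :
    paritySum (fun a => g a - h a) = paritySum g - paritySum h := by
  simp only [paritySum, mul_sub, sum_sub_distrib]

lemma paritySum_sum {κ : Type*} (t : Finset κ) (c : κ → ℝ) (g : κ → (Fin n → ℝ) → ℝ) :
    paritySum (fun a => ∑ k ∈ t, c k * g k a) = ∑ k ∈ t, c k * paritySum (g k) := by
  simp only [paritySum, mul_sum]
  rw [sum_comm]
  simp only [mul_left_comm]

lemma paritySum_prod_subset (S : Finset (Fin n)) :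
    paritySum (fun a => ∏ j ∈ S, a j) = if S = univ then 1 else 0 := by
  have hprod (a : Fin n → ℝ) : (∏ j, (2 * a j - 1)) * ∏ j ∈ S, a j =
      ∏ j, (2 * a j - 1) * if j ∈ S then a j else 1 := by
    rw [prod_mul_distrib, prod_ite_mem, univ_inter]
  simp only [paritySum, hprod]
  rw [sum_boolCube_prod fun j t => (2 * t - 1) * if j ∈ S then t else 1]
  trans ∏ j, if j ∈ S then (1 : ℝ) else 0
  · exact prod_congr rfl fun j _ => by split_ifs <;> norm_num
  · simp only [Fintype.prod_boole, eq_univ_iff_forall]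
    congr

lemma paritySum_monomial_eq_zero {α : Fin n →₀ ℕ} {j : Fin n} (hj : α j = 0) :
    paritySum (fun a => ∏ k, a k ^ α k) = 0 := by
  simp only [paritySum, ← prod_mul_distrib]
  rw [sum_boolCube_prod fun k t => (2 * t - 1) * t ^ α k]
  exact prod_eq_zero (mem_univ j) (by norm_num [hj])

lemma exists_eq_zero_of_mem_support_of_totalDegree_lt {p : MvPolynomial (Fin n) ℝ}
    (hp : p.totalDegree < n) {α : Fin n →₀ ℕ} (hα : α ∈ p.support) : ∃ j, α j = 0 := by
  by_contra! hpos
  have : n ≤ α.sum fun _ e => e := by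
    rw [Finsupp.sum_fintype _ _ fun _ => rfl]
    simpa using sum_le_sum fun j (_ : j ∈ univ) => Nat.one_le_iff_ne_zero.2 (hpos j)
  exact hp.not_ge (this.trans (le_totalDegree hα))

lemma paritySum_eval_eq_zero {p : MvPolynomial (Fin n) ℝ} (hp : p.totalDegree < n) :
    paritySum (fun a => eval a p) = 0 := by
  simp only [eval_eq']
  rw [paritySum_sum]
  refine sum_eq_zero fun α hα => ?_
  obtain ⟨j, hj⟩ := exists_eq_zero_of_mem_support_of_totalDegree_lt hp hα
  rw [paritySum_monomial_eq_zero hj, mul_zero]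

end Cube

section Sensitivity

variable {n : ℕ}

noncomputable def flipCoord (x : Fin n → ℝ) (j : Fin n) : Fin n → ℝ :=
  Function.update x j (1 - x j)

lemma flipCoord_mem_boolCube {x : Fin n → ℝ} (hx : x ∈ boolCube n) (j : Fin n) :
    flipCoord x j ∈ boolCube n := by
  refine mem_boolCube.2 fun k => ?_
  rcases eq_or_ne k j with rfl | hkj
  · rcases mem_boolCube.1 hx k with h | h <;> simp [flipCoord, h]
  · simpa [flipCoord, hkj] using mem_boolCube.1 hx k

lemma flipCoord_injective {x : Fin n → ℝ} (hx : x ∈ boolCube n) :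
    Function.Injective (flipCoord x) := by
  intro j j' hjj'
  by_contra hne
  have := congr_fun hjj' j
  simp only [flipCoord, Function.update_self, Function.update_of_ne hne] at this
  rcases mem_boolCube.1 hx j with h | h <;> rw [h] at this <;> norm_num at this

lemma hammingDist_eq_one_iff_exists_flipCoord_eq {x y : Fin n → ℝ} (hx : x ∈ boolCube n)
    (hy : y ∈ boolCube n) :
    hammingDist x y = 1 ↔ ∃ j, flipCoord x j = y := by
  rw [hammingDist, card_eq_one]
  refine exists_congr fun j => ?_
  rw [Finset.ext_iff, funext_iff]
  refine forall_congr' fun k => ?_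
  simp only [mem_filter, mem_univ, true_and, mem_singleton, flipCoord, Function.update_apply]
  rcases eq_or_ne k j with rfl | hkj
  · rcases mem_boolCube.1 hx k with h₁ | h₁ <;> rcases mem_boolCube.1 hy k with h₂ | h₂ <;>
      simp [h₁, h₂]
  · simp [hkj]

lemma locSens_eq_card_flipCoord (f : (Fin n → ℝ) → ℝ) {x : Fin n → ℝ} (hx : x ∈ boolCube n) :
    locSens {0, 1} f x = #{j | f (flipCoord x j) ≠ f x} := by
  have himage : {y ∈ boolCube n | hammingDist x y = 1 ∧ f y ≠ f x} =
      ({j | f (flipCoord x j) ≠ f x} : Finset (Fin n)).image (flipCoord x) := by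
    ext y
    simp only [mem_filter, mem_image, mem_univ, true_and]
    constructor
    · rintro ⟨hy, hdist, hfy⟩
      obtain ⟨j, rfl⟩ := (hammingDist_eq_one_iff_exists_flipCoord_eq hx hy).1 hdist
      exact ⟨j, hfy, rfl⟩
    · rintro ⟨j, hfj, rfl⟩
      have hj := flipCoord_mem_boolCube hx j
      exact ⟨hj, (hammingDist_eq_one_iff_exists_flipCoord_eq hx hj).2 ⟨j, rfl⟩, hfj⟩
  exact (congr_arg card himage).trans (card_image_of_injective _ (flipCoord_injective hx))

end Sensitivity

section Tribes

variable {n : ℕ} {ι : Type*}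

lemma forall_mem_eq_one_iff_ne_of_flipCoord {P : ι → Finset (Fin n)}
    (hdisj : Pairwise fun i j => Disjoint (P i) (P j))
    {x : Fin n → ℝ} (hx : ¬∃ i, ∀ k ∈ P i, x k = 1) {j : Fin n}
    (hflip : ∃ i, ∀ k ∈ P i, flipCoord x j k = 1) {i : ι} (hj : j ∈ P i) :
    ∀ k ∈ P i, (x k = 1 ↔ k ≠ j) := by
  obtain ⟨i', hi'⟩ := hflip
  have hji' : j ∈ P i' := by
    by_contra hji'
    refine hx ⟨i', fun k hk => ?_⟩
    simpa [flipCoord, ne_of_mem_of_not_mem hk hji'] using hi' k hk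
  obtain rfl : i' = i := by_contra fun h => disjoint_left.1 (hdisj h) hji' hj
  intro k hk
  rcases eq_or_ne k j with rfl | hkj
  · have hk0 : x k = 0 := by simpa [flipCoord] using hi' k hk
    simp [hk0]
  · simpa [flipCoord, hkj] using hi' k hk

variable [Fintype ι]

open scoped Classical in
noncomputable def tribes (P : ι → Finset (Fin n)) (x : Fin n → ℝ) : ℝ :=
  if ∃ i, ∀ j ∈ P i, x j = 1 then 1 else 0

noncomputable def tribesPoly (P : ι → Finset (Fin n)) : MvPolynomial (Fin n) ℝ :=
  1 - ∏ i, (1 - ∏ j ∈ P i, X j)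

lemma eval_tribesPoly (P : ι → Finset (Fin n)) {x : Fin n → ℝ} (hx : x ∈ boolCube n) :
    eval x (tribesPoly P) = tribes P x := by
  simp only [tribesPoly, tribes, map_sub, map_one, map_prod, eval_X,
    prod_eq_ite_of_mem_boolCube hx]
  split_ifs with h
  · obtain ⟨i, hi⟩ := h
    rw [prod_eq_zero (mem_univ i) (by rw [if_pos hi, sub_self]), sub_zero]
  · rw [prod_eq_one fun i _ => by rw [if_neg fun hi => h ⟨i, hi⟩, sub_zero], sub_self]

lemma totalDegree_tribesPoly_le (P : ι → Finset (Fin n)) :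
    (tribesPoly P).totalDegree ≤ ∑ i, #(P i) := by
  refine (totalDegree_sub _ _).trans (max_le (by simp) ?_)
  refine (totalDegree_finsetProd _ _).trans (sum_le_sum fun i _ => ?_)
  refine (totalDegree_sub _ _).trans (max_le (by simp) ?_)
  refine (totalDegree_finsetProd _ _).trans ?_
  simp

variable {P : ι → Finset (Fin n)}

lemma tribes_eq_one {x : Fin n → ℝ} (h : ∃ i, ∀ j ∈ P i, x j = 1) : tribes P x = 1 :=
  if_pos h

lemma tribes_eq_zero {x : Fin n → ℝ} (h : ¬∃ i, ∀ j ∈ P i, x j = 1) : tribes P x = 0 :=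
  if_neg h

lemma biUnion_eq_univ_iff_of_pairwise_disjoint (hdisj : Pairwise fun i j => Disjoint (P i) (P j))
    (hcover : ∀ j, ∃ i, j ∈ P i) (hne : ∀ i, (P i).Nonempty) [DecidableEq ι] {t : Finset ι} :
    t.biUnion P = univ ↔ t = univ := by
  refine ⟨fun ht => eq_univ_of_forall fun i => ?_, fun ht => ?_⟩
  · obtain ⟨j, hj⟩ := hne i
    obtain ⟨i', hi't, hji'⟩ := mem_biUnion.1 (ht ▸ mem_univ j)
    obtain rfl : i' = i := by_contra fun h => disjoint_left.1 (hdisj h) hji' hj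
    exact hi't
  · refine eq_univ_of_forall fun j => ?_
    obtain ⟨i, hi⟩ := hcover j
    exact mem_biUnion.2 ⟨i, ht ▸ mem_univ i, hi⟩

lemma paritySum_prod_one_sub_prod (hdisj : Pairwise fun i j => Disjoint (P i) (P j))
    (hcover : ∀ j, ∃ i, j ∈ P i) (hne : ∀ i, (P i).Nonempty) :
    paritySum (fun a => ∏ i, (1 - ∏ j ∈ P i, a j)) = (-1) ^ Fintype.card ι := by
  classical
  have hexpand (a : Fin n → ℝ) : ∏ i, (1 - ∏ j ∈ P i, a j) =
      ∑ t ∈ univ.powerset, (-1) ^ #t * ∏ j ∈ t.biUnion P, a j := by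
    rw [prod_sub]
    refine sum_congr rfl fun t _ => ?_
    rw [prod_const_one, mul_one, prod_biUnion fun i _ i' _ h => hdisj h]
  simp only [hexpand, paritySum_sum, paritySum_prod_subset,
    biUnion_eq_univ_iff_of_pairwise_disjoint hdisj hcover hne]
  rw [sum_eq_single_of_mem univ (mem_powerset_self _) fun t _ ht => by rw [if_neg ht, mul_zero],
    if_pos rfl, mul_one, card_univ]

lemma le_totalDegree_of_eval_eq_tribes (hn : 0 < n)
    (hdisj : Pairwise fun i j => Disjoint (P i) (P j)) (hcover : ∀ j, ∃ i, j ∈ P i)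
    (hne : ∀ i, (P i).Nonempty) {p : MvPolynomial (Fin n) ℝ}
    (hp : ∀ x ∈ boolCube n, eval x p = tribes P x) : n ≤ p.totalDegree := by
  by_contra! hlt
  have hone : paritySum (fun _ : Fin n → ℝ => (1 : ℝ)) = 0 := by
    have : (∅ : Finset (Fin n)) ≠ univ := (univ_nonempty_iff.2 ⟨⟨0, hn⟩⟩).ne_empty.symm
    simpa [this] using paritySum_prod_subset (∅ : Finset (Fin n))
  have hcorr : paritySum (fun a => eval a p) = -(-1) ^ Fintype.card ι := by
    rw [paritySum_congr fun a ha => (hp a ha).trans (eval_tribesPoly P ha).symm]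
    simp only [tribesPoly, map_sub, map_one, map_prod, eval_X]
    rw [paritySum_sub, hone, paritySum_prod_one_sub_prod hdisj hcover hne, zero_sub]
  rw [paritySum_eval_eq_zero hlt] at hcorr
  simp at hcorr

lemma card_sensitive_le_card_of_forall_eq_one {x : Fin n → ℝ} {i : ι}
    (hi : ∀ k ∈ P i, x k = 1) : #{j | tribes P (flipCoord x j) ≠ tribes P x} ≤ #(P i) := by
  refine card_le_card fun j hj => ?_
  by_contra hji
  have hflip : ∀ k ∈ P i, flipCoord x j k = 1 := fun k hk => by
    rw [flipCoord, Function.update_of_ne (ne_of_mem_of_not_mem hk hji)]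
    exact hi k hk
  rw [mem_filter, tribes_eq_one ⟨i, hi⟩, tribes_eq_one ⟨i, hflip⟩] at hj
  exact hj.2 rfl

lemma card_sensitive_le_card_of_not_exists (hdisj : Pairwise fun i j => Disjoint (P i) (P j))
    (hcover : ∀ j, ∃ i, j ∈ P i) {x : Fin n → ℝ} (hx : ¬∃ i, ∀ k ∈ P i, x k = 1) :
    #{j | tribes P (flipCoord x j) ≠ tribes P x} ≤ Fintype.card ι := by
  choose b hb using hcover
  have hblock {j : Fin n} (hj : tribes P (flipCoord x j) ≠ tribes P x) :
      ∀ k ∈ P (b j), (x k = 1 ↔ k ≠ j) := by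
    refine forall_mem_eq_one_iff_ne_of_flipCoord hdisj hx ?_ (hb j)
    by_contra h
    exact hj (by rw [tribes_eq_zero h, tribes_eq_zero hx])
  refine card_le_card_of_injOn b (fun _ _ => mem_coe.2 (mem_univ _)) fun j hj j' hj' hbb => ?_
  simp only [mem_coe, mem_filter, mem_univ, true_and] at hj hj'
  have hxj : x j ≠ 1 := fun h => (hblock hj j (hb j)).1 h rfl
  by_contra hjj'
  exact hxj ((hblock hj' j (hbb ▸ hb j)).2 hjj')

lemma sens_tribes_le (hdisj : Pairwise fun i j => Disjoint (P i) (P j))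
    (hcover : ∀ j, ∃ i, j ∈ P i) {m : ℕ} (hsize : ∀ i, #(P i) ≤ m)
    (hcard : Fintype.card ι ≤ m) : sens {0, 1} (tribes P) ≤ m := by
  refine Finset.sup_le fun x hx => ?_
  rw [locSens_eq_card_flipCoord _ hx]
  by_cases h : ∃ i, ∀ k ∈ P i, x k = 1
  · obtain ⟨i, hi⟩ := h
    exact (card_sensitive_le_card_of_forall_eq_one hi).trans (hsize i)
  · exact (card_sensitive_le_card_of_not_exists hdisj hcover h).trans hcard

lemma card_le_sens_tribes (hdisj : Pairwise fun i j => Disjoint (P i) (P j))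
    (hne : ∀ i, (P i).Nonempty) (i : ι) : #(P i) ≤ sens {0, 1} (tribes P) := by
  set x : Fin n → ℝ := fun k => if k ∈ P i then 1 else 0
  have hx : x ∈ boolCube n := mem_boolCube.2 fun k => by by_cases hk : k ∈ P i <;> simp [x, hk]
  have hsub : P i ⊆ ({j | tribes P (flipCoord x j) ≠ tribes P x} : Finset (Fin n)) := by
    intro j hj
    rw [mem_filter, tribes_eq_one (x := x) ⟨i, fun k hk => by simp [x, hk]⟩, tribes_eq_zero]
    · exact ⟨mem_univ j, zero_ne_one⟩
    rintro ⟨i', hi'⟩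
    rcases eq_or_ne i' i with rfl | hii'
    · simpa [flipCoord, x, hj] using hi' j hj
    · obtain ⟨k, hk⟩ := hne i'
      have hki : k ∉ P i := disjoint_left.1 (hdisj hii') hk
      simpa [flipCoord, x, hki, (ne_of_mem_of_not_mem hj hki).symm] using hi' k hk
  calc #(P i) ≤ #{j | tribes P (flipCoord x j) ≠ tribes P x} := card_le_card hsub
    _ = locSens {0, 1} (tribes P) x := (locSens_eq_card_flipCoord _ hx).symm
    _ ≤ sens {0, 1} (tribes P) := le_sup hx

end Tribes

open scoped Classical in
/-- The tribes function with `s` tribes of size `s`: given a partition `P₁, …, P_s` of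
`{1,…,s²}` into blocks of size `s`, on Boolean inputs `x ∈ {0,1}^{s²}` the function
`f(x) = max_i min_{j ∈ P_i} x_j` (which equals `1` iff some block has all coordinates `1`)
has degree exactly `s²`, attained by the polynomial `1 - ∏ᵢ (1 - ∏_{j ∈ Pᵢ} xⱼ)`, and
sensitivity exactly `s`. -/
theorem tribes_degree_sensitivity (s : ℕ) (hs : 1 ≤ s)
    (P : Fin s → Finset (Fin (s ^ 2)))
    (hdisj : Pairwise fun i j => Disjoint (P i) (P j))
    (hcover : ∀ j, ∃ i, j ∈ P i)
    (hsize : ∀ i, (P i).card = s)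
    (f : (Fin (s ^ 2) → ℝ) → ℝ)
    (hf : ∀ x : Fin (s ^ 2) → ℝ, (∀ j, x j ∈ ({0, 1} : Finset ℝ)) →
      f x = if ∃ i, ∀ j ∈ P i, x j = 1 then 1 else 0) :
    fdeg (fun _ => ({0, 1} : Finset ℝ)) f = s ^ 2 ∧
    ((1 - ∏ i, (1 - ∏ j ∈ P i, X j) : MvPolynomial (Fin (s ^ 2)) ℝ).totalDegree = s ^ 2 ∧
      ∀ x : Fin (s ^ 2) → ℝ, (∀ j, x j ∈ ({0, 1} : Finset ℝ)) →
        MvPolynomial.eval x (1 - ∏ i, (1 - ∏ j ∈ P i, X j) : MvPolynomial (Fin (s ^ 2)) ℝ)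
          = f x) ∧
    sens ({0, 1} : Finset ℝ) f = s := by
  have hne : ∀ i, (P i).Nonempty := fun i => card_pos.1 (by rw [hsize]; exact hs)
  have htribes : ∀ x ∈ boolCube (s ^ 2), f x = tribes P x := fun x hx => by
    rw [hf x (Fintype.mem_piFinset.1 hx), tribes]
    -- the two `if`s differ only in their `Decidable` instances
    congr
  have hrep : ∀ x : Fin (s ^ 2) → ℝ, (∀ j, x j ∈ ({0, 1} : Finset ℝ)) →
      eval x (tribesPoly P) = f x := fun x hx =>
    have hx : x ∈ boolCube (s ^ 2) := Fintype.mem_piFinset.2 hx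
    (eval_tribesPoly P hx).trans (htribes x hx).symm
  have hmin : ∀ p : MvPolynomial (Fin (s ^ 2)) ℝ,
      (∀ x : Fin (s ^ 2) → ℝ, (∀ j, x j ∈ ({0, 1} : Finset ℝ)) → eval x p = f x) →
        s ^ 2 ≤ p.totalDegree := fun p hp =>
    le_totalDegree_of_eval_eq_tribes (by positivity) hdisj hcover hne fun x hx =>
      (hp x (Fintype.mem_piFinset.1 hx)).trans (htribes x hx)
  have hdeg : (tribesPoly P).totalDegree = s ^ 2 :=
    le_antisymm ((totalDegree_tribesPoly_le P).trans (by simp [hsize, sq])) (hmin _ hrep)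
  refine ⟨?_, ⟨hdeg, hrep⟩, ?_⟩
  · rw [fdeg_eq_totalDegree hrep fun p hp => hdeg.trans_le (hmin p hp), hdeg]
  · rw [sens_congr htribes]
    exact le_antisymm (sens_tribes_le hdisj hcover (fun i => (hsize i).le) (Fintype.card_fin s).le)
      ((hsize ⟨0, hs⟩).symm.trans_le (card_le_sens_tribes hdisj hne _))
end
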